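/- For every natural number g, the number of permutations σ of {1, …, g} that avoid the pattern 1,2,3 — i.e., for which there is no triple of indices i < j < k with σ(i) < σ(j) < σ(k) — equals the g-th Catalan number C_g. -/

import Mathlib

/-!
Reversing the positions turns `123`-avoiding permutations into `321`-avoiding ones. A permutation
avoids `321` iff it is increasing both on its excedances `P = {i | i < σ i}` and on the remaining
points, so it is determined by `P` and `V = σ '' P`. The pairs `(P, V)` that occur are exactly the
*ballot pairs*: `#V = #P` and for every `t` at most `#{p ∈ P | p < t}` elements of `V` are `≤ t`.
Writing, for `t = 0, 1, …, n - 1`, a down step iff `t ∈ V` followed by an up step iff `t ∈ P`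
turns the ballot conditions into the prefix conditions of a Dyck word of semilength `n`, and there
are `catalan n` of those.
-/

open Finset Equiv DyckStep

section Order

lemma Equiv.subtypeCongr_apply_of_pos {α : Type*} {p q : α → Prop} [DecidablePred p]
    [DecidablePred q] (e : {x // p x} ≃ {x // q x}) (f : {x // ¬p x} ≃ {x // ¬q x}) {a : α}
    (h : p a) : e.subtypeCongr f a = e ⟨a, h⟩ := by
  simp [Equiv.subtypeCongr, Equiv.sumCompl_symm_apply_of_pos h]

lemma Equiv.subtypeCongr_apply_of_neg {α : Type*} {p q : α → Prop} [DecidablePred p]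
    [DecidablePred q] (e : {x // p x} ≃ {x // q x}) (f : {x // ¬p x} ≃ {x // ¬q x}) {a : α}
    (h : ¬p a) : e.subtypeCongr f a = f ⟨a, h⟩ := by
  simp [Equiv.subtypeCongr, Equiv.sumCompl_symm_apply_of_neg h]

def Fintype.orderIsoOfCardEq (β γ : Type*) [LinearOrder β] [Fintype β] [LinearOrder γ] [Fintype γ]
    (h : Fintype.card β = Fintype.card γ) : β ≃o γ :=
  (Fintype.orderIsoFinOfCardEq β h).symm.trans (Fintype.orderIsoFinOfCardEq γ rfl)

variable {α : Type*} [LinearOrder α]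

lemma card_filter_lt_add_one_of_mem {s : Finset α} {a : α} (ha : a ∈ s) :
    #{y ∈ s | y < a} + 1 = #{y ∈ s | y ≤ a} := by
  rw [← card_insert_of_notMem (s := {y ∈ s | y < a}) (a := a) (by simp)]
  congr 1
  ext y
  simp only [mem_insert, mem_filter, le_iff_lt_or_eq]
  aesop

variable [Fintype α]

lemma card_filter_add_card_filter_compl (s : Finset α) (p : α → Prop) [DecidablePred p] :
    #{y ∈ s | p y} + #{y ∈ sᶜ | p y} = #{y | p y} := by
  rw [← card_union_of_disjoint (disjoint_filter_filter disjoint_compl_right), ← filter_union,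
    union_compl]

lemma card_filter_lt_orderIso {p q : α → Prop} [DecidablePred p] [DecidablePred q]
    (e : {x // p x} ≃o {x // q x}) (x : {x // p x}) :
    #{y | q y ∧ y < e x} = #{y | p y ∧ y < x} := by
  symm
  refine card_bij (fun y hy => e ⟨y, (mem_filter.1 hy).2.1⟩) ?_ ?_ ?_
  · intro y hy
    simp only [mem_filter, mem_univ, true_and] at hy ⊢
    exact ⟨(e _).2, e.lt_iff_lt.2 (Subtype.mk_lt_mk.2 hy.2)⟩
  · intro a _ b _ h
    simpa using e.injective (Subtype.ext h)
  · intro b hb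
    simp only [mem_filter, mem_univ, true_and] at hb
    refine ⟨e.symm ⟨b, hb.1⟩, ?_, by simp⟩
    simp only [mem_filter, mem_univ, true_and]
    exact ⟨(e.symm _).2, e.symm_apply_lt.2 (Subtype.mk_lt_mk.2 hb.2)⟩

/-- Order isomorphisms between finite linear orders are unique. -/
lemma Equiv.Perm.apply_eq_orderIso {p q : α → Prop} (σ : Perm α) (hσ : ∀ x, q (σ x) ↔ p x)
    (hmono : StrictMonoOn σ {x | p x}) (e : {x // p x} ≃o {x // q x}) (x : {x // p x}) :
    σ x = e x := by
  let e' : {x // p x} ≃o {x // q x} :=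
    { toEquiv := σ.subtypeEquiv fun x => (hσ x).symm
      map_rel_iff' := hmono.le_iff_le (Subtype.property _) (Subtype.property _) }
  exact congrArg (fun f : {x // p x} ≃o {x // q x} => (f x : α)) (Subsingleton.elim e' e)

end Order

section Avoids321

variable {α : Type*} [LinearOrder α]

def Avoids321 (σ : Perm α) : Prop := ¬ ∃ i j k, i < j ∧ j < k ∧ σ j < σ i ∧ σ k < σ j

instance [Fintype α] : DecidablePred (Avoids321 (α := α)) := fun σ => by
  unfold Avoids321; infer_instance

lemma avoids321_of_strictMonoOn (σ : Perm α) (s : Set α) (hs : StrictMonoOn σ s)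
    (hsc : StrictMonoOn σ sᶜ) : Avoids321 σ := by
  rintro ⟨i, j, k, hij, hjk, hji, hkj⟩
  have split {a b : α} (hab : a < b) (hba : σ b < σ a) : a ∈ s ↔ b ∉ s := by
    by_cases ha : a ∈ s <;> by_cases hb : b ∈ s
    · exact absurd (hs ha hb hab) (lt_asymm hba)
    · simp [ha, hb]
    · simp [ha, hb]
    · exact absurd (hsc ha hb hab) (lt_asymm hba)
  have := split hij hji
  have := split hjk hkj
  have := split (hij.trans hjk) (hkj.trans hji)
  tauto

namespace Avoids321

variable {σ : Perm α}

lemma inv (hσ : Avoids321 σ) : Avoids321 σ⁻¹ := by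
  rintro ⟨i, j, k, hij, hjk, hji, hkj⟩
  exact hσ ⟨σ⁻¹ k, σ⁻¹ j, σ⁻¹ i, hkj, hji, by simpa using hjk, by simpa using hij⟩

variable [Fintype α]

/-- If `σ j < σ i` with `i < j ≤ σ j`, the values below `σ j` cannot all sit at the positions
before `j` other than `i`, so one of them completes a `321`. -/
lemma apply_lt_apply_of_le_apply (hσ : Avoids321 σ) {i j : α} (hij : i < j) (hj : j ≤ σ j) :
    σ i < σ j := by
  by_contra! hji
  replace hji : σ j < σ i := hji.lt_of_ne (σ.injective.ne hij.ne')
  have hsub : ({k | σ k < σ j} : Finset α) ⊆ ({k | k < j} : Finset α).erase i := by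
    intro k hk
    simp only [mem_filter, mem_univ, true_and, mem_erase] at hk ⊢
    refine ⟨fun hki => lt_asymm (hki ▸ hk) hji, ?_⟩
    by_contra! hjk
    have hjk : j < k := hjk.lt_of_ne fun h => (h ▸ hk).false
    exact hσ ⟨i, j, k, hij, hjk, hji, hk⟩
  have hcard : #({k | σ k < σ j} : Finset α) = #({v | v < σ j} : Finset α) :=
    card_equiv σ (by simp)
  have hle : #({k | k < j} : Finset α) ≤ #({v | v < σ j} : Finset α) :=
    card_le_card (monotone_filter_right _ fun _ _ hk => hk.trans_le hj)
  have := card_le_card hsub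
  rw [card_erase_of_mem (by simpa using hij), hcard] at this
  have : 0 < #({k | k < j} : Finset α) := card_pos.2 ⟨i, by simpa using hij⟩
  omega

lemma apply_lt_apply_of_apply_le (hσ : Avoids321 σ) {i j : α} (hij : i < j) (hi : σ i ≤ i) :
    σ i < σ j := by
  by_contra! hji
  replace hji : σ j < σ i := hji.lt_of_ne (σ.injective.ne hij.ne')
  have hij' : j < i := by simpa using hσ.inv.apply_lt_apply_of_le_apply hji (by simpa using hi)
  exact lt_asymm hij hij'

end Avoids321

end Avoids321

section BallotPair

variable {α : Type*} [LinearOrder α]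

def excedances [Fintype α] (σ : Perm α) : Finset α := {i | i < σ i}

lemma mem_excedances [Fintype α] {σ : Perm α} {i : α} : i ∈ excedances σ ↔ i < σ i := by
  simp [excedances]

def IsBallotPair (P V : Finset α) : Prop := #V = #P ∧ ∀ t, #{v ∈ V | v ≤ t} ≤ #{p ∈ P | p < t}

variable [Fintype α]

instance (P V : Finset α) : Decidable (IsBallotPair P V) := by
  unfold IsBallotPair; infer_instance

lemma isBallotPair_excedances (σ : Perm α) :
    IsBallotPair (excedances σ) ((excedances σ).map σ.toEmbedding) := by
  refine ⟨card_map _, fun t => ?_⟩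
  rw [filter_map, card_map]
  refine card_le_card fun i hi => ?_
  simp only [mem_filter, mem_excedances, Function.comp_apply, Equiv.coe_toEmbedding] at hi ⊢
  exact ⟨hi.1, hi.1.trans_le hi.2⟩

def ballotFill (P V : Finset α) (h : #V = #P) : Perm α :=
  subtypeCongr (Fintype.orderIsoOfCardEq {x // x ∈ P} {x // x ∈ V} (by simp [h])).toEquiv
    (Fintype.orderIsoOfCardEq {x // x ∉ P} {x // x ∉ V} (by simp [Fintype.card_subtype_compl, h]))

section ballotFill

variable {P V : Finset α} (h : #V = #P)

lemma ballotFill_apply_of_mem {x : α} (hx : x ∈ P) :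
    ballotFill P V h x = Fintype.orderIsoOfCardEq {x // x ∈ P} {x // x ∈ V} (by simp [h]) ⟨x, hx⟩ :=
  subtypeCongr_apply_of_pos _ _ hx

lemma ballotFill_apply_of_notMem {x : α} (hx : x ∉ P) :
    ballotFill P V h x = Fintype.orderIsoOfCardEq {x // x ∉ P} {x // x ∉ V}
      (by simp [Fintype.card_subtype_compl, h]) ⟨x, hx⟩ :=
  subtypeCongr_apply_of_neg _ _ hx

lemma ballotFill_mem_iff (x : α) : ballotFill P V h x ∈ V ↔ x ∈ P := by
  by_cases hx : x ∈ P
  · simp [hx, ballotFill_apply_of_mem h hx]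
  · simp only [hx, ballotFill_apply_of_notMem h hx, iff_false]
    exact (Fintype.orderIsoOfCardEq {x // x ∉ P} {x // x ∉ V} _ ⟨x, hx⟩).2

lemma strictMonoOn_ballotFill : StrictMonoOn (ballotFill P V h) P := by
  intro x hx y hy hxy
  rw [ballotFill_apply_of_mem h hx, ballotFill_apply_of_mem h hy]
  simpa using hxy

lemma strictMonoOn_compl_ballotFill : StrictMonoOn (ballotFill P V h) (↑P)ᶜ := by
  intro x hx y hy hxy
  rw [ballotFill_apply_of_notMem h hx, ballotFill_apply_of_notMem h hy]
  simpa using hxy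

lemma eq_ballotFill_of_strictMonoOn (σ : Perm α) (hσ : ∀ x, σ x ∈ V ↔ x ∈ P)
    (hP : StrictMonoOn σ P) (hPc : StrictMonoOn σ (↑P)ᶜ) : σ = ballotFill P V h := by
  ext x
  by_cases hx : x ∈ P
  · rw [ballotFill_apply_of_mem h hx]
    exact σ.apply_eq_orderIso hσ hP _ ⟨x, hx⟩
  · rw [ballotFill_apply_of_notMem h hx]
    exact σ.apply_eq_orderIso (fun x => (hσ x).not) hPc _ ⟨x, hx⟩

lemma map_ballotFill : P.map (ballotFill P V h).toEmbedding = V := by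
  ext v
  rw [mem_map_equiv, ← ballotFill_mem_iff h, Equiv.apply_symm_apply]

lemma card_filter_lt_ballotFill_of_mem {x : α} (hx : x ∈ P) :
    #{v ∈ V | v < ballotFill P V h x} = #{p ∈ P | p < x} := by
  simpa only [ballotFill_apply_of_mem h hx, filter_and, filter_mem_eq_inter, univ_inter,
    inter_filter, inter_univ] using
    card_filter_lt_orderIso (Fintype.orderIsoOfCardEq {x // x ∈ P} {x // x ∈ V} _) ⟨x, hx⟩

lemma card_filter_lt_ballotFill_of_notMem {x : α} (hx : x ∉ P) :
    #{v ∈ Vᶜ | v < ballotFill P V h x} = #{p ∈ Pᶜ | p < x} := by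
  simpa only [ballotFill_apply_of_notMem h hx, filter_and, filter_not, filter_mem_eq_inter,
    univ_inter, inter_filter, inter_univ, ← compl_eq_univ_sdiff]
    using card_filter_lt_orderIso (Fintype.orderIsoOfCardEq {x // x ∉ P} {x // x ∉ V} _) ⟨x, hx⟩

lemma excedances_ballotFill (hPV : IsBallotPair P V) : excedances (ballotFill P V hPV.1) = P := by
  ext x
  rw [mem_excedances]
  set y := ballotFill P V hPV.1 x
  by_cases hx : x ∈ P
  · simp only [hx, iff_true]
    -- `y` has as many points of `V` below it as `x` has points of `P`; `y ≤ x` then breaks the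
    -- ballot inequality at `y`.
    by_contra! hyx
    have h₁ : #{v ∈ V | v < y} + 1 = #{v ∈ V | v ≤ y} :=
      card_filter_lt_add_one_of_mem ((ballotFill_mem_iff hPV.1 x).2 hx)
    have h₂ : #{v ∈ V | v < y} = #{p ∈ P | p < x} := card_filter_lt_ballotFill_of_mem hPV.1 hx
    have h₃ : #{p ∈ P | p < y} ≤ #{p ∈ P | p < x} :=
      card_le_card (monotone_filter_right _ fun _ _ hp => hp.trans_le hyx)
    have := hPV.2 y
    omega
  · simp only [hx, iff_false, not_lt]
    -- If `x < y`, too few of the points `≤ x` lie outside `V`, breaking the inequality at `x`.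
    by_contra! hxy
    have h₁ : #{v ∈ Vᶜ | v < y} = #{p ∈ Pᶜ | p < x} :=
      card_filter_lt_ballotFill_of_notMem hPV.1 hx
    have h₂ : #{v ∈ Vᶜ | v ≤ x} ≤ #{v ∈ Vᶜ | v < y} :=
      card_le_card (monotone_filter_right _ fun _ _ hv => hv.trans_lt hxy)
    have h₃ := card_filter_add_card_filter_compl V (· ≤ x)
    have h₄ := card_filter_add_card_filter_compl P (· < x)
    have h₅ := card_filter_lt_add_one_of_mem (mem_univ x)
    have := hPV.2 x
    omega

end ballotFill

lemma Avoids321.eq_ballotFill {σ : Perm α} (hσ : Avoids321 σ) :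
    σ = ballotFill _ _ (isBallotPair_excedances σ).1 := by
  refine eq_ballotFill_of_strictMonoOn _ σ (fun x => ?_) (fun i _ j hj hij => ?_)
    (fun i hi j _ hij => ?_)
  · simp
  · exact hσ.apply_lt_apply_of_le_apply hij (mem_excedances.1 hj).le
  · exact hσ.apply_lt_apply_of_apply_le hij (not_lt.1 (mem_excedances.not.1 hi))

theorem card_avoids321_eq_card_isBallotPair :
    #{σ : Perm α | Avoids321 σ} = #{PV : Finset α × Finset α | IsBallotPair PV.1 PV.2} := by
  refine card_bij' (fun σ _ => (excedances σ, (excedances σ).map σ.toEmbedding))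
    (fun PV hPV => ballotFill PV.1 PV.2 (mem_filter.1 hPV).2.1) ?_ ?_ ?_ ?_
  · intro σ _
    simpa using isBallotPair_excedances σ
  · intro PV _
    simpa using avoids321_of_strictMonoOn _ _ (strictMonoOn_ballotFill _)
      (strictMonoOn_compl_ballotFill _)
  · intro σ hσ
    exact ((mem_filter.1 hσ).2.eq_ballotFill).symm
  · rintro ⟨P, V⟩ hPV
    have hPV : IsBallotPair P V := (mem_filter.1 hPV).2
    simp only [excedances_ballotFill hPV, map_ballotFill]

end BallotPair

section BallotWord

lemma card_filter_lt_succ (s : Finset ℕ) (t : ℕ) :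
    #{x ∈ s | x < t + 1} = #{x ∈ s | x < t} + if t ∈ s then 1 else 0 := by
  simp_rw [Nat.lt_succ_iff_lt_or_eq, filter_or, filter_eq']
  split_ifs with ht
  · rw [card_union_of_disjoint (disjoint_singleton_right.2 (by simp)), card_singleton]
  · simp

def ballotWord (P V : Finset ℕ) : ℕ → List DyckStep
  | 0 => []
  | t + 1 => ballotWord P V t ++ [if t ∈ V then D else U, if t ∈ P then U else D]

variable (P V : Finset ℕ)

lemma length_ballotWord (m : ℕ) : (ballotWord P V m).length = 2 * m := by
  induction m with
  | zero => rfl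
  | succ m ih => simp [ballotWord, ih]; ring

lemma count_U_ballotWord (m : ℕ) :
    (ballotWord P V m).count U + #{v ∈ V | v < m} = m + #{p ∈ P | p < m} := by
  induction m with
  | zero => simp [ballotWord]
  | succ m ih =>
    simp only [ballotWord, List.count_append, card_filter_lt_succ]
    split_ifs <;> simp <;> omega

lemma count_D_ballotWord (m : ℕ) :
    (ballotWord P V m).count D + #{p ∈ P | p < m} = m + #{v ∈ V | v < m} := by
  induction m with
  | zero => simp [ballotWord]
  | succ m ih =>
    simp only [ballotWord, List.count_append, card_filter_lt_succ]
    split_ifs <;> simp <;> omega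

variable {P V}

lemma take_ballotWord {t m : ℕ} (h : t ≤ m) :
    (ballotWord P V m).take (2 * t) = ballotWord P V t := by
  induction m with
  | zero => simp [Nat.le_zero.1 h, ballotWord]
  | succ m ih =>
    rcases h.lt_or_eq with h | rfl
    · rw [ballotWord, List.take_append_of_le_length (by simp [length_ballotWord]; omega),
        ih (by omega)]
    · exact List.take_of_length_le (by simp [length_ballotWord])

lemma take_ballotWord_two_mul_add_one {t m : ℕ} (h : t < m) :
    (ballotWord P V m).take (2 * t + 1) = ballotWord P V t ++ [if t ∈ V then D else U] := by
  rw [← min_eq_left (by omega : 2 * t + 1 ≤ 2 * (t + 1)), ← List.take_take, take_ballotWord h,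
    ballotWord, List.take_append, List.take_of_length_le (by simp [length_ballotWord]),
    length_ballotWord]
  simp

lemma getElem?_ballotWord_two_mul {t m : ℕ} (h : t < m) :
    (ballotWord P V m)[2 * t]? = some (if t ∈ V then D else U) := by
  rw [← List.getElem?_take_of_lt (by omega : 2 * t < 2 * t + 1),
    take_ballotWord_two_mul_add_one h, List.getElem?_append_right (by simp [length_ballotWord])]
  simp [length_ballotWord]

lemma getElem?_ballotWord_two_mul_add_one {t m : ℕ} (h : t < m) :
    (ballotWord P V m)[2 * t + 1]? = some (if t ∈ P then U else D) := by
  rw [← List.getElem?_take_of_lt (by omega : 2 * t + 1 < 2 * (t + 1)), take_ballotWord h,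
    ballotWord, List.getElem?_append_right (by simp [length_ballotWord])]
  simp [length_ballotWord]

lemma count_D_le_count_U_take_ballotWord_iff {t m : ℕ} (h : t < m) :
    ((ballotWord P V m).take (2 * t + 1)).count D ≤ ((ballotWord P V m).take (2 * t + 1)).count U ↔
      #{v ∈ V | v < t + 1} ≤ #{p ∈ P | p < t} := by
  have hU := count_U_ballotWord P V t
  have hD := count_D_ballotWord P V t
  rw [take_ballotWord_two_mul_add_one h, List.count_append, List.count_append,
    card_filter_lt_succ]
  split_ifs <;> simp <;> omega

lemma ballotWord_isDyck_iff (m : ℕ) :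
    ((ballotWord P V m).count U = (ballotWord P V m).count D ∧
      ∀ i, ((ballotWord P V m).take i).count D ≤ ((ballotWord P V m).take i).count U) ↔
    (#{v ∈ V | v < m} = #{p ∈ P | p < m} ∧ ∀ t < m, #{v ∈ V | v < t + 1} ≤ #{p ∈ P | p < t}) := by
  have hU := count_U_ballotWord P V m
  have hD := count_D_ballotWord P V m
  refine ⟨fun ⟨hbal, hpre⟩ => ⟨by omega, fun t ht =>
    (count_D_le_count_U_take_ballotWord_iff ht).1 (hpre _)⟩, fun ⟨hbal, hpre⟩ => ⟨by omega, ?_⟩⟩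
  intro i
  rcases le_or_gt (2 * m) i with hi | hi
  · rw [List.take_of_length_le (by rwa [length_ballotWord])]
    omega
  obtain ⟨t, rfl | rfl⟩ := Nat.even_or_odd' i
  · rw [take_ballotWord (by omega)]
    have hU := count_U_ballotWord P V t
    have hD := count_D_ballotWord P V t
    suffices #{v ∈ V | v < t} ≤ #{p ∈ P | p < t} by omega
    cases t with
    | zero => simp
    | succ s =>
      exact le_trans (hpre s (by omega))
        (card_le_card (monotone_filter_right _ fun _ _ h => h.trans (Nat.lt_succ_self s)))
  · exact (count_D_le_count_U_take_ballotWord_iff (by omega)).2 (hpre t (by omega))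

end BallotWord

section FinBallotWord

variable {n : ℕ}

def finBallotWord (P V : Finset (Fin n)) : List DyckStep :=
  ballotWord (P.map Fin.valEmbedding) (V.map Fin.valEmbedding) n

lemma length_finBallotWord (P V : Finset (Fin n)) : (finBallotWord P V).length = 2 * n :=
  length_ballotWord _ _ n

lemma isBallotPair_iff_finBallotWord (P V : Finset (Fin n)) :
    IsBallotPair P V ↔ ((finBallotWord P V).count U = (finBallotWord P V).count D ∧
      ∀ i, ((finBallotWord P V).take i).count D ≤ ((finBallotWord P V).take i).count U) := by
  rw [finBallotWord, ballotWord_isDyck_iff, IsBallotPair]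
  simp only [filter_map, card_map, Function.comp_def, Fin.valEmbedding_apply, Fin.is_lt,
    filter_true, Fin.forall_iff, Fin.le_def, Fin.lt_def, Nat.lt_succ_iff]

def ballotPairOfList (n : ℕ) (l : List DyckStep) : Finset (Fin n) × Finset (Fin n) :=
  (({t | l[2 * t.val + 1]? = some U} : Finset (Fin n)), ({t | l[2 * t.val]? = some D} : Finset _))

lemma mem_ballotPairOfList_fst {l : List DyckStep} {t : Fin n} :
    t ∈ (ballotPairOfList n l).1 ↔ l[2 * t.val + 1]? = some U := by
  simp [ballotPairOfList]

lemma mem_ballotPairOfList_snd {l : List DyckStep} {t : Fin n} :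
    t ∈ (ballotPairOfList n l).2 ↔ l[2 * t.val]? = some D := by
  simp [ballotPairOfList]

lemma ballotPairOfList_finBallotWord (P V : Finset (Fin n)) :
    ballotPairOfList n (finBallotWord P V) = (P, V) := by
  ext t
  · simp [mem_ballotPairOfList_fst, finBallotWord, getElem?_ballotWord_two_mul_add_one t.isLt,
      Fin.val_inj]
  · simp [mem_ballotPairOfList_snd, finBallotWord, getElem?_ballotWord_two_mul t.isLt, Fin.val_inj]

lemma finBallotWord_ballotPairOfList {l : List DyckStep} (hl : l.length = 2 * n) :
    finBallotWord (ballotPairOfList n l).1 (ballotPairOfList n l).2 = l := by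
  refine List.ext_getElem? fun i => ?_
  rcases lt_or_ge i (2 * n) with hi | hi
  · obtain ⟨t, rfl | rfl⟩ := Nat.even_or_odd' i
    · have hl' : l[2 * t]? = some l[2 * t] := List.getElem?_eq_getElem (by omega)
      rw [finBallotWord, getElem?_ballotWord_two_mul (by omega), hl']
      rcases l[2 * t].dichotomy with h | h <;>
        simp [Fin.exists_iff, mem_ballotPairOfList_snd, h, hl', show t < n by omega]
    · have hl' : l[2 * t + 1]? = some l[2 * t + 1] := List.getElem?_eq_getElem (by omega)
      rw [finBallotWord, getElem?_ballotWord_two_mul_add_one (by omega), hl']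
      rcases l[2 * t + 1].dichotomy with h | h <;>
        simp [Fin.exists_iff, mem_ballotPairOfList_fst, h, hl', show t < n by omega]
  · rw [List.getElem?_eq_none (by rw [length_finBallotWord]; omega),
      List.getElem?_eq_none (by omega)]

lemma DyckWord.length_eq_two_mul_of_semilength_eq {w : DyckWord} (hw : w.semilength = n) :
    w.toList.length = 2 * n := by
  rw [← w.two_mul_semilength_eq_length, hw]

def IsBallotPair.toDyckWord {P V : Finset (Fin n)} (h : IsBallotPair P V) : DyckWord where
  toList := finBallotWord P V
  count_U_eq_count_D := ((isBallotPair_iff_finBallotWord P V).1 h).1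
  count_D_le_count_U := ((isBallotPair_iff_finBallotWord P V).1 h).2

lemma IsBallotPair.semilength_toDyckWord {P V : Finset (Fin n)} (h : IsBallotPair P V) :
    h.toDyckWord.semilength = n := by
  have : 2 * h.toDyckWord.semilength = 2 * n :=
    h.toDyckWord.two_mul_semilength_eq_length.trans (length_finBallotWord P V)
  omega

def isBallotPairEquivDyckWord (n : ℕ) :
    {PV : Finset (Fin n) × Finset (Fin n) // IsBallotPair PV.1 PV.2} ≃
      {w : DyckWord // w.semilength = n} where
  toFun PV := ⟨PV.2.toDyckWord, PV.2.semilength_toDyckWord⟩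
  invFun w := ⟨ballotPairOfList n w.1.toList, by
    rw [isBallotPair_iff_finBallotWord,
      finBallotWord_ballotPairOfList (w.1.length_eq_two_mul_of_semilength_eq w.2)]
    exact ⟨w.1.count_U_eq_count_D, w.1.count_D_le_count_U⟩⟩
  left_inv PV := Subtype.ext (ballotPairOfList_finBallotWord PV.1.1 PV.1.2)
  right_inv w := Subtype.ext <| DyckWord.ext <|
    finBallotWord_ballotPairOfList (w.1.length_eq_two_mul_of_semilength_eq w.2)

theorem card_isBallotPair_eq_catalan (n : ℕ) :
    #{PV : Finset (Fin n) × Finset (Fin n) | IsBallotPair PV.1 PV.2} = catalan n := by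
  rw [← Fintype.card_subtype, Fintype.card_congr (isBallotPairEquivDyckWord n),
    DyckWord.card_dyckWord_semilength_eq_catalan]

end FinBallotWord

lemma avoids321_mul_revPerm_iff {n : ℕ} (σ : Perm (Fin n)) :
    Avoids321 (σ * Fin.revPerm) ↔ ¬ ∃ i j k : Fin n, i < j ∧ j < k ∧ σ i < σ j ∧ σ j < σ k := by
  refine not_congr ⟨fun ⟨i, j, k, hij, hjk, hji, hkj⟩ => ?_, fun ⟨i, j, k, hij, hjk, h₁, h₂⟩ => ?_⟩
  · exact ⟨k.rev, j.rev, i.rev, Fin.rev_lt_rev.2 hjk, Fin.rev_lt_rev.2 hij, hkj, hji⟩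
  · exact ⟨k.rev, j.rev, i.rev, Fin.rev_lt_rev.2 hjk, Fin.rev_lt_rev.2 hij, by simpa using h₂,
      by simpa using h₁⟩

/-- The number of permutations of `Fin g` avoiding the pattern `1,2,3`
(no indices `i < j < k` with `σ i < σ j < σ k`) equals the `g`-th Catalan number. -/
theorem card_pattern_123_avoiding_perms (g : ℕ) :
    (Finset.univ.filter fun σ : Equiv.Perm (Fin g) =>
      ¬ ∃ i j k : Fin g, i < j ∧ j < k ∧ σ i < σ j ∧ σ j < σ k).card = catalan g := by
  calc _ = #{σ : Perm (Fin g) | Avoids321 σ} :=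
        card_equiv (Equiv.mulRight Fin.revPerm) fun σ => by
          simp only [mem_filter, mem_univ, true_and, coe_mulRight, avoids321_mul_revPerm_iff]
    _ = #{PV : Finset (Fin g) × Finset (Fin g) | IsBallotPair PV.1 PV.2} :=
        card_avoids321_eq_card_isBallotPair
    _ = catalan g := card_isBallotPair_eq_catalan g
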